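/- For all constants c₁ > 0 and M ≥ 1 there exists K > 0 such that for all n ≥ 1, all σ² ≥ c₁·n, all m ∈ ℝ with |m| ≤ M·√n, all α ∈ [0, M·√n] and all β ≥ α + √n/2: ∫_0^{α} g_{m,σ²}(z) dz ≤ K · ∫_{α}^{β} g_{m,σ²}(z) dz. -/

import Mathlib

/-!
On `[0, α]` the density is at most its peak value `(2πσ²)^{-1/2}`, so the left mass is at most
`M √n` times the peak. On `[α, α + √n/2]` every point is within `3M√n` of the mean, and
`σ² ≥ c₁ n` turns this into a lower bound `e^{-9M²/(2c₁)}` times the peak for the density there.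
Comparing the two gives `K = 2M e^{9M²/(2c₁)}`.
-/

/-- The Gaussian density with mean `μ` and variance `σ2`. -/
noncomputable def gaussDensity (μ σ2 x : ℝ) : ℝ :=
  (Real.sqrt (2 * Real.pi * σ2))⁻¹ * Real.exp (-(x - μ) ^ 2 / (2 * σ2))

open Real Set intervalIntegral

lemma continuous_gaussDensity (μ σ2 : ℝ) : Continuous (gaussDensity μ σ2) := by
  unfold gaussDensity
  fun_prop

lemma gaussDensity_nonneg (μ σ2 x : ℝ) : 0 ≤ gaussDensity μ σ2 x := by
  unfold gaussDensity
  positivity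

lemma gaussDensity_le {σ2 : ℝ} (hσ : 0 ≤ σ2) (μ x : ℝ) :
    gaussDensity μ σ2 x ≤ (√(2 * π * σ2))⁻¹ := by
  unfold gaussDensity
  refine mul_le_of_le_one_right (by positivity) (exp_le_one_iff.mpr ?_)
  exact div_nonpos_of_nonpos_of_nonneg (neg_nonpos.mpr (sq_nonneg _)) (by positivity)

lemma le_gaussDensity_of_sq_le {μ σ2 x D : ℝ} (hσ : 0 < σ2)
    (hx : (x - μ) ^ 2 ≤ 2 * σ2 * D) :
    (√(2 * π * σ2))⁻¹ * exp (-D) ≤ gaussDensity μ σ2 x := by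
  unfold gaussDensity
  gcongr
  rw [neg_div, neg_le_neg_iff, div_le_iff₀ (by positivity)]
  linarith

lemma integral_gaussDensity_le {σ2 a b : ℝ} (hσ : 0 ≤ σ2) (μ : ℝ) (hab : a ≤ b) :
    ∫ x in a..b, gaussDensity μ σ2 x ≤ (b - a) * (√(2 * π * σ2))⁻¹ := by
  rw [← smul_eq_mul, ← integral_const]
  exact integral_mono_on hab ((continuous_gaussDensity μ σ2).intervalIntegrable a b)
    intervalIntegrable_const (fun x _ => gaussDensity_le hσ μ x)

lemma le_integral_gaussDensity {μ σ2 a b D : ℝ} (hσ : 0 < σ2) (hab : a ≤ b)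
    (hD : ∀ x ∈ Icc a b, (x - μ) ^ 2 ≤ 2 * σ2 * D) :
    (b - a) * ((√(2 * π * σ2))⁻¹ * exp (-D)) ≤ ∫ x in a..b, gaussDensity μ σ2 x := by
  rw [← smul_eq_mul, ← integral_const]
  exact integral_mono_on hab intervalIntegrable_const
    ((continuous_gaussDensity μ σ2).intervalIntegrable a b)
    (fun x hx => le_gaussDensity_of_sq_le hσ (hD x hx))

lemma integral_gaussDensity_mono_right {μ σ2 a b c : ℝ} (hab : a ≤ b) (hbc : b ≤ c) :
    ∫ x in a..b, gaussDensity μ σ2 x ≤ ∫ x in a..c, gaussDensity μ σ2 x :=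
  integral_mono_interval le_rfl hab hbc (.of_forall (gaussDensity_nonneg μ σ2))
    ((continuous_gaussDensity μ σ2).intervalIntegrable a c)

/-- Gaussian comparison: for a Gaussian law with variance at least `c₁ n` and mean
of size at most `M √n`, the mass of `[0, α]` with `α ≤ M √n` is at most a constant
(depending only on `c₁, M`) times the mass of an adjacent interval `[α, β]` of
length at least `√n / 2`. -/
theorem gaussian_adjacent_interval_comparison
    (c₁ M : ℝ) (hc : 0 < c₁) (hM : 1 ≤ M) :
    ∃ K : ℝ, 0 < K ∧
      ∀ n : ℕ, 1 ≤ n → ∀ m σ2 α β : ℝ,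
        c₁ * (n : ℝ) ≤ σ2 → |m| ≤ M * Real.sqrt n →
        α ∈ Set.Icc (0 : ℝ) (M * Real.sqrt n) → α + Real.sqrt n / 2 ≤ β →
        (∫ z in (0 : ℝ)..α, gaussDensity m σ2 z)
          ≤ K * ∫ z in α..β, gaussDensity m σ2 z := by
  set D := 9 * M ^ 2 / (2 * c₁)
  refine ⟨2 * M * exp D, by positivity, fun n hn m σ2 α β hσ hm ⟨hα0, hαM⟩ hβ => ?_⟩
  set t := √(n : ℝ)
  have ht : 1 ≤ t := one_le_sqrt.mpr (by exact_mod_cast hn)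
  have htn : t ^ 2 = n := sq_sqrt (Nat.cast_nonneg n)
  have hσ0 : 0 < σ2 := lt_of_lt_of_le (by positivity) hσ
  set C := (√(2 * π * σ2))⁻¹
  have hleft : ∫ z in (0 : ℝ)..α, gaussDensity m σ2 z ≤ M * t * C := by
    refine (integral_gaussDensity_le hσ0.le m hα0).trans ?_
    gcongr
    linarith
  have hnear : ∀ z ∈ Icc α (α + t / 2), (z - m) ^ 2 ≤ 2 * σ2 * D := by
    rintro z ⟨hz₁, hz₂⟩
    obtain ⟨hm₁, hm₂⟩ := abs_le.mp hm
    calc (z - m) ^ 2 ≤ (3 * M * t) ^ 2 := sq_le_sq' (by nlinarith) (by nlinarith)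
      _ = 9 * M ^ 2 * n := by rw [← htn]; ring
      _ ≤ 9 * M ^ 2 * (σ2 / c₁) := by gcongr; rwa [le_div_iff₀' hc]
      _ = 2 * σ2 * D := by simp only [D]; field_simp
  have hright : t / 2 * (C * exp (-D)) ≤ ∫ z in α..β, gaussDensity m σ2 z := by
    calc t / 2 * (C * exp (-D)) ≤ ∫ z in α..α + t / 2, gaussDensity m σ2 z := by
          simpa using le_integral_gaussDensity hσ0 (by linarith) hnear
      _ ≤ ∫ z in α..β, gaussDensity m σ2 z :=
          integral_gaussDensity_mono_right (by linarith) hβ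
  calc ∫ z in (0 : ℝ)..α, gaussDensity m σ2 z ≤ M * t * C := hleft
    _ = 2 * M * exp D * (t / 2 * (C * exp (-D))) := by
        rw [exp_neg]; field_simp
    _ ≤ 2 * M * exp D * ∫ z in α..β, gaussDensity m σ2 z := by gcongr
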